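/- For every right-infinite binary word x, the word 0μ(00μ(x)) is 7/3-power-free if and only if 00μ(x) is 7/3-power-free. -/
import Mathlib


/-- Thue–Morse morphism on finite binary words: 0 ↦ 01, 1 ↦ 10 (0 = false, 1 = true). -/
def mu (w : List Bool) : List Bool := w.flatMap (fun b => [b, !b])

/-- Thue–Morse morphism on right-infinite binary words. -/
def muI (x : ℕ → Bool) : ℕ → Bool := fun n => if n % 2 = 0 then x (n / 2) else !(x (n / 2))

/-- Prepend a finite word to an infinite word. -/
def appendInf (u : List Bool) (x : ℕ → Bool) : ℕ → Bool :=
  fun n => if h : n < u.length then u.get ⟨n, h⟩ else x (n - u.length)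

/-- `w` is a prefix of the infinite word `x`. -/
def InfPrefix (w : List Bool) (x : ℕ → Bool) : Prop :=
  ∀ i (h : i < w.length), w.get ⟨i, h⟩ = x i

/-- The finite word `w` is `p`-periodic. -/
def ListPeriodic (w : List Bool) (p : ℕ) : Prop :=
  ∀ i, i + p < w.length → w.getD i false = w.getD (i + p) false

/-- `w` occurs as a factor of the infinite word `x`. -/
def IsFactor (x : ℕ → Bool) (w : List Bool) : Prop :=
  ∃ i, ∀ k (h : k < w.length), w.get ⟨k, h⟩ = x (i + k)

/-- `w` has exponent ≥ β : it has a period `p ≥ 1` with `|w| ≥ β·p`. -/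
def HasExpGE (w : List Bool) (β : ℚ) : Prop :=
  ∃ p, 1 ≤ p ∧ ListPeriodic w p ∧ β * p ≤ (w.length : ℚ)

/-- `w` has exponent > β. -/
def HasExpGT (w : List Bool) (β : ℚ) : Prop :=
  ∃ p, 1 ≤ p ∧ ListPeriodic w p ∧ β * p < (w.length : ℚ)

/-- The infinite word `x` is β-power-free: no factor has exponent ≥ β. -/
def FreeI (x : ℕ → Bool) (β : ℚ) : Prop := ∀ w, IsFactor x w → ¬ HasExpGE w β

/-- The infinite word `x` is β⁺-power-free: no factor has exponent > β. -/
def FreePlusI (x : ℕ → Bool) (β : ℚ) : Prop := ∀ w, IsFactor x w → ¬ HasExpGT w β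

/-- The finite word `x` is β-power-free. -/
def FreeL (x : List Bool) (β : ℚ) : Prop := ∀ w, w <:+: x → ¬ HasExpGE w β

/-- The finite word `x` is β⁺-power-free. -/
def FreeLPlus (x : List Bool) (β : ℚ) : Prop := ∀ w, w <:+: x → ¬ HasExpGT w β

/-- The infinite word `x` is 7/3-power-free. -/
def Free73 (x : ℕ → Bool) : Prop := FreeI x (7/3)

/-- The prefix of length `n` of the infinite word `x` is `p`-periodic. -/
def PrefPeriodic (x : ℕ → Bool) (p n : ℕ) : Prop := ∀ i, i + p < n → x i = x (i + p)

/-- The set {ε, 0, 00, 1, 11}. -/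
def P5 : Set (List Bool) :=
  {[], [false], [false, false], [true], [true, true]}

/-- Thue–Morse word: parity of the number of ones in base 2. -/
def tmWord (n : ℕ) : Bool := (Nat.digits 2 n).sum % 2 == 1

/-- Lexicographic order (0 < 1) on infinite binary words. -/
def LexLE (u v : ℕ → Bool) : Prop :=
  u = v ∨ ∃ n, (∀ k < n, u k = v k) ∧ u n = false ∧ v n = true

/-- The 2-kernel of an infinite word. -/
def Kernel2 (x : ℕ → Bool) : Set (ℕ → Bool) :=
  {y | ∃ i j, j < 2 ^ i ∧ y = fun n => x (2 ^ i * n + j)}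

/-- An infinite word is 2-automatic iff its 2-kernel is finite. -/
def TwoAutomatic (x : ℕ → Bool) : Prop := (Kernel2 x).Finite

section Stmt10Aux


lemma muI_even (y : ℕ → Bool) (k : ℕ) : muI y (2*k) = y k := by
  have h1 : (2*k) % 2 = 0 := by omega
  have h2 : (2*k) / 2 = k := by omega
  simp [muI, h1, h2]

lemma muI_odd (y : ℕ → Bool) (k : ℕ) : muI y (2*k+1) = !(y k) := by
  have h1 : (2*k+1) % 2 = 1 := by omega
  have h2 : (2*k+1) / 2 = k := by omega
  simp [muI, h1, h2]

/-- A "run" violation: a p-periodic stretch of length N starting at i with 7p ≤ 3N. -/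
lemma notFree_of_run (y : ℕ → Bool) (i p N : ℕ) (h1 : 1 ≤ p) (h2 : 7*p ≤ 3*N)
    (h3 : ∀ t, t + p < N → y (i+t) = y (i+t+p)) : ¬ Free73 y := by
  intro hy
  refine hy (List.ofFn (fun j : Fin N => y (i + j))) ⟨i, ?_⟩ ⟨p, h1, ?_, ?_⟩
  · intro k h
    simp
  · intro t ht
    rw [List.length_ofFn] at ht
    rw [List.getD_eq_getElem _ _ (by simpa using (by omega : t < N)),
        List.getD_eq_getElem _ _ (by simpa using ht)]
    simpa [Nat.add_assoc] using h3 t ht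
  · rw [List.length_ofFn, div_mul_eq_mul_div, div_le_iff₀ (by norm_num : (0:ℚ) < 3)]
    have : (7*p : ℚ) ≤ 3*N := by exact_mod_cast h2
    push_cast
    linarith

lemma run_of_notFree (y : ℕ → Bool) (h : ¬ Free73 y) :
    ∃ i p N, 1 ≤ p ∧ 7*p ≤ 3*N ∧ ∀ t, t + p < N → y (i+t) = y (i+t+p) := by
  rw [Free73, FreeI] at h
  push_neg at h
  obtain ⟨w, ⟨i, hi⟩, p, hp1, hper, hlen⟩ := h
  refine ⟨i, p, w.length, hp1, ?_, ?_⟩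
  · rw [div_mul_eq_mul_div, div_le_iff₀ (by norm_num : (0:ℚ) < 3)] at hlen
    push_cast at hlen
    have : (7*(p:ℚ)) ≤ 3*(w.length:ℚ) := by linarith
    exact_mod_cast this
  · intro t ht
    have e1 := hi t (by omega)
    have e2 := hi (t+p) ht
    have e3 := hper t ht
    rw [List.getD_eq_getElem _ _ (by omega : t < w.length),
        List.getD_eq_getElem _ _ (by omega : t + p < w.length)] at e3
    rw [List.get_eq_getElem] at e1 e2
    rw [e1, e2] at e3
    simpa [Nat.add_assoc] using e3

/-- No aaa factor (cube of a letter) in a 7/3-free word. -/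
lemma notFree_of_cube (y : ℕ → Bool) (K : ℕ) (c1 : y K = y (K+1)) (c2 : y (K+1) = y (K+2)) :
    ¬ Free73 y := by
  apply notFree_of_run y K 1 3 (by omega) (by omega)
  intro t ht
  have : t = 0 ∨ t = 1 := by omega
  rcases this with rfl | rfl
  · simpa using c1
  · simpa using c2

/-- Key lemma A: a 7/3-free word's μ-image contains no violating run. -/
lemma no_run_muI (y : ℕ → Bool) (hy : Free73 y) (i p N : ℕ) (h1 : 1 ≤ p) (h2 : 7*p ≤ 3*N)
    (h3 : ∀ t, t + p < N → muI y (i+t) = muI y (i+t+p)) : False := by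
  obtain ⟨a, hia⟩ : ∃ a, i = 2*a ∨ i = 2*a + 1 := ⟨i/2, by omega⟩
  rcases Nat.even_or_odd p with ⟨q, hq⟩ | ⟨h, hp⟩
  · -- p = 2q even: de-substitute to a q-periodic run in y
    have hq1 : 1 ≤ q := by omega
    obtain ⟨m, hm1, hm2⟩ : ∃ m, 4*q ≤ 3*m ∧ 2*m ≤ N - 2*q + 1 :=
      ⟨(N - 2*q + 1)/2, by omega, by omega⟩
    have key : ∀ d, d < m → y (a + d) = y (a + d + q) := by
      intro d hd
      have ht := h3 (2*d) (by omega)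
      rcases hia with hi2 | hi2
      · rw [show i + 2*d = 2*(a+d) by omega, show 2*(a+d) + p = 2*(a+d+q) by omega,
            muI_even, muI_even] at ht
        exact ht
      · rw [show i + 2*d = 2*(a+d)+1 by omega, show (2*(a+d)+1) + p = 2*(a+d+q)+1 by omega,
            muI_odd, muI_odd] at ht
        simpa using ht
    exact notFree_of_run y a q (m+q) hq1 (by omega)
      (fun t htq => by
        have := key t (by omega)
        simpa [Nat.add_assoc] using this) hy
  · -- p = 2h+1 odd
    rcases Nat.lt_or_ge h 2 with hh | hh
    · interval_cases h
      · -- p = 1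
        rcases hia with hi2 | hi2
        · have ht := h3 0 (by omega)
          rw [show i + 0 = 2*a by omega, show 2*a + p = 2*a+1 by omega,
              muI_even, muI_odd] at ht
          simp at ht
        · have ht := h3 1 (by omega)
          rw [show i + 1 = 2*(a+1) by omega, show 2*(a+1) + p = 2*(a+1)+1 by omega,
              muI_even, muI_odd] at ht
          simp at ht
      · -- p = 3
        have hN : 7 ≤ N := by omega
        rcases hia with hi2 | hi2
        · have t0 := h3 0 (by omega)
          have t1 := h3 1 (by omega)
          have t2 := h3 2 (by omega)
          rw [show i + 0 = 2*a by omega, show 2*a + p = 2*(a+1)+1 by omega,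
              muI_even, muI_odd] at t0
          rw [show i + 1 = 2*a+1 by omega, show (2*a+1) + p = 2*(a+2) by omega,
              muI_odd, muI_even] at t1
          rw [show i + 2 = 2*(a+1) by omega, show 2*(a+1) + p = 2*(a+2)+1 by omega,
              muI_even, muI_odd] at t2
          cases hA : y a <;> cases hB : y (a+1) <;> cases hC : y (a+2) <;> simp_all
        · have t1 := h3 1 (by omega)
          have t2 := h3 2 (by omega)
          have t3 := h3 3 (by omega)
          rw [show i + 1 = 2*(a+1) by omega, show 2*(a+1) + p = 2*(a+2)+1 by omega,
              muI_even, muI_odd] at t1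
          rw [show i + 2 = 2*(a+1)+1 by omega, show (2*(a+1)+1) + p = 2*(a+3) by omega,
              muI_odd, muI_even] at t2
          rw [show i + 3 = 2*(a+2) by omega, show 2*(a+2) + p = 2*(a+3)+1 by omega,
              muI_even, muI_odd] at t3
          cases hA : y (a+1) <;> cases hB : y (a+2) <;> cases hC : y (a+3) <;> simp_all
    · -- p = 2h+1, h ≥ 2 : find a cube in y
      have hN : 2*h + 6 ≤ N := by omega
      rcases hia with hi2 | hi2
      · have t0 := h3 0 (by omega)
        have t1 := h3 1 (by omega)
        have t2 := h3 2 (by omega)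
        have t3 := h3 3 (by omega)
        rw [show i + 0 = 2*a by omega, show 2*a + p = 2*(a+h)+1 by omega,
            muI_even, muI_odd] at t0
        rw [show i + 1 = 2*a+1 by omega, show (2*a+1) + p = 2*(a+h+1) by omega,
            muI_odd, muI_even] at t1
        rw [show i + 2 = 2*(a+1) by omega, show 2*(a+1) + p = 2*(a+h+1)+1 by omega,
            muI_even, muI_odd] at t2
        rw [show i + 3 = 2*(a+1)+1 by omega, show (2*(a+1)+1) + p = 2*(a+h+2) by omega,
            muI_odd, muI_even] at t3
        have c1 : y (a+h) = y (a+h+1) := by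
          cases hA : y a <;> simp_all
        have c2 : y (a+h+1) = y (a+h+2) := by
          cases hA : y (a+1) <;> simp_all
        exact notFree_of_cube y (a+h) c1 (by simpa [Nat.add_assoc] using c2) hy
      · have t0 := h3 0 (by omega)
        have t1 := h3 1 (by omega)
        have t2 := h3 2 (by omega)
        have t3 := h3 3 (by omega)
        have t4 := h3 4 (by omega)
        rw [show i + 0 = 2*a+1 by omega, show (2*a+1) + p = 2*(a+h+1) by omega,
            muI_odd, muI_even] at t0
        rw [show i + 1 = 2*(a+1) by omega, show 2*(a+1) + p = 2*(a+h+1)+1 by omega,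
            muI_even, muI_odd] at t1
        rw [show i + 2 = 2*(a+1)+1 by omega, show (2*(a+1)+1) + p = 2*(a+h+2) by omega,
            muI_odd, muI_even] at t2
        rw [show i + 3 = 2*(a+2) by omega, show 2*(a+2) + p = 2*(a+h+2)+1 by omega,
            muI_even, muI_odd] at t3
        rw [show i + 4 = 2*(a+2)+1 by omega, show (2*(a+2)+1) + p = 2*(a+h+3) by omega,
            muI_odd, muI_even] at t4
        have c1 : y (a+h+1) = y (a+h+2) := by
          cases hA : y (a+1) <;> simp_all
        have c2 : y (a+h+2) = y (a+h+3) := by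
          cases hA : y (a+2) <;> simp_all
        exact notFree_of_cube y (a+h+1) (by simpa [Nat.add_assoc] using c1)
          (by simpa [Nat.add_assoc] using c2) hy

lemma app1_zero (g : ℕ → Bool) : appendInf [false] g 0 = false := by simp [appendInf]
lemma app1_succ (g : ℕ → Bool) (n : ℕ) : appendInf [false] g (n+1) = g n := by simp [appendInf]
lemma app2_zero (g : ℕ → Bool) : appendInf [false,false] g 0 = false := by simp [appendInf]
lemma app2_one (g : ℕ → Bool) : appendInf [false,false] g 1 = false := by simp [appendInf]
lemma app2_succ (g : ℕ → Bool) (n : ℕ) : appendInf [false,false] g (n+2) = g n := by simp [appendInf]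

/-- From a base-0 odd-period run pattern on a μ-image, extract a cube in the preimage. -/
lemma cube_of_odd_run (w : ℕ → Bool) (hh : ℕ)
    (E0 : muI w 0 = muI w (2*hh+1)) (E1 : muI w 1 = muI w (2*hh+2))
    (E2 : muI w 2 = muI w (2*hh+3)) (E3 : muI w 3 = muI w (2*hh+4)) :
    w hh = w (hh+1) ∧ w (hh+1) = w (hh+2) := by
  have m0 : muI w 0 = w 0 := by simpa using muI_even w 0
  have m1 : muI w 1 = !(w 0) := by simpa using muI_odd w 0
  have m2 : muI w 2 = w 1 := by simpa using muI_even w 1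
  have m3 : muI w 3 = !(w 1) := by simpa using muI_odd w 1
  have r0 : muI w (2*hh+1) = !(w hh) := muI_odd w hh
  have r1 : muI w (2*hh+2) = w (hh+1) := by
    rw [show 2*hh+2 = 2*(hh+1) by omega]; exact muI_even w (hh+1)
  have r2 : muI w (2*hh+3) = !(w (hh+1)) := by
    rw [show 2*hh+3 = 2*(hh+1)+1 by omega]; exact muI_odd w (hh+1)
  have r3 : muI w (2*hh+4) = w (hh+2) := by
    rw [show 2*hh+4 = 2*(hh+2) by omega]; exact muI_even w (hh+2)
  rw [m0, r0] at E0
  rw [m1, r1] at E1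
  rw [m2, r2] at E2
  rw [m3, r3] at E3
  constructor
  · cases h0 : w 0 <;> simp [h0] at E0 E1 <;> simp [E0, E1]
  · cases h0 : w 1 <;> simp [h0] at E2 E3 <;> simp [E2, E3]

/-- Key lemma B: no violating run starting at position 0 of 0·μ(y) when y = 00·μ(x) is free. -/
lemma no_prefix_run (x y : ℕ → Bool)
    (hyx : ∀ n, y (n+2) = muI x n) (hy0 : y 0 = false) (hy1 : y 1 = false)
    (hy : Free73 y) (p N : ℕ) (h1 : 1 ≤ p) (h2 : 7*p ≤ 3*N)
    (h3 : ∀ t, t + p < N → appendInf [false] (muI y) t = appendInf [false] (muI y) (t+p)) :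
    False := by
  have S : ∀ s, s + p + 1 < N → muI y s = muI y (s+p) := by
    intro s hs
    have := h3 (s+1) (by omega)
    rwa [app1_succ, show s+1+p = (s+p)+1 by omega, app1_succ] at this
  rcases Nat.even_or_odd p with ⟨q, hq⟩ | ⟨h, hp⟩
  · -- p = 2q even
    have hq1 : 1 ≤ q := by omega
    have hzp := h3 0 (by omega)
    rw [app1_zero, show 0 + p = (2*(q-1)+1)+1 by omega, app1_succ, muI_odd] at hzp
    have hqt : y (q-1) = true := by
      cases hc : y (q-1)
      · rw [hc] at hzp; exact absurd hzp (by decide)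
      · rfl
    obtain ⟨m, hm1, hm2⟩ : ∃ m, 4*q ≤ 3*m + 1 ∧ 2*m + 2*q ≤ N := ⟨(N - 2*q)/2, by omega, by omega⟩
    have key : ∀ d, d < m → y d = y (d + q) := by
      intro d hd
      have := S (2*d) (by omega)
      rwa [show 2*d + p = 2*(d+q) by omega, muI_even, muI_even] at this
    rcases Nat.lt_or_ge q 2 with hqs | hq2
    · -- q = 1
      rw [show q-1 = 0 by omega, hy0] at hqt
      exact absurd hqt (by decide)
    · rcases Nat.even_or_odd q with ⟨r, hr⟩ | ⟨hh, hqo⟩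
      · -- q even ≥ 2
        have k0 := key 0 (by omega)
        have k1 := key 1 (by omega)
        rw [show 0 + q = 2*(r-1)+2 by omega, hyx, muI_even, hy0] at k0
        rw [show 1 + q = (2*(r-1)+1)+2 by omega, hyx, muI_odd, hy1] at k1
        rw [← k0] at k1
        exact absurd k1 (by decide)
      · -- q odd ≥ 3
        by_cases hbig : 4*q ≤ 3*m
        · exact notFree_of_run y 0 q (m+q) hq1 (by omega)
            (fun t ht => by simpa using key t (by omega)) hy
        · -- 3m = 4q - 1, forces q ≡ 1 (mod 3), q odd, so q ≥ 7 and m ≥ 9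
          have hqm : 7 ≤ q ∧ 9 ≤ m := by omega
          have f0 : y 2 = muI x 0 := by simpa using hyx 0
          have f1 : y 3 = muI x 1 := by simpa using hyx 1
          have f2 : y 4 = muI x 2 := by simpa using hyx 2
          have f3 : y 5 = muI x 3 := by simpa using hyx 3
          have e0 := key 2 (by omega)
          have e1 := key 3 (by omega)
          have e2 := key 4 (by omega)
          have e3 := key 5 (by omega)
          rw [f0, show 2 + q = (2*hh+1)+2 by omega, hyx] at e0
          rw [f1, show 3 + q = (2*hh+2)+2 by omega, hyx] at e1
          rw [f2, show 4 + q = (2*hh+3)+2 by omega, hyx] at e2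
          rw [f3, show 5 + q = (2*hh+4)+2 by omega, hyx] at e3
          obtain ⟨c1, c2⟩ := cube_of_odd_run x hh e0 e1 e2 e3
          refine notFree_of_run y (2+2*hh) 2 6 (by omega) (by omega) ?_ hy
          intro t ht
          have ht4 : t = 0 ∨ t = 1 ∨ t = 2 ∨ t = 3 := by omega
          rcases ht4 with rfl | rfl | rfl | rfl
          · rw [show 2+2*hh+0+2 = 2*(hh+1)+2 by omega, show 2+2*hh+0 = 2*hh+2 by omega,
               hyx, hyx, muI_even, muI_even]
            exact c1
          · rw [show 2+2*hh+1+2 = (2*(hh+1)+1)+2 by omega, show 2+2*hh+1 = (2*hh+1)+2 by omega,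
               hyx, hyx, muI_odd, muI_odd, c1]
          · rw [show 2+2*hh+2+2 = 2*(hh+2)+2 by omega, show 2+2*hh+2 = 2*(hh+1)+2 by omega,
               hyx, hyx, muI_even, muI_even]
            exact c2
          · rw [show 2+2*hh+3+2 = (2*(hh+2)+1)+2 by omega, show 2+2*hh+3 = (2*(hh+1)+1)+2 by omega,
               hyx, hyx, muI_odd, muI_odd, c2]
  · -- p = 2h+1 odd
    have hS0 := S 0 (by omega)
    have m0 : muI y 0 = y 0 := by simpa using muI_even y 0
    rw [m0, hy0, show 0 + p = 2*h+1 by omega, muI_odd] at hS0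
    have hht : y h = true := by
      cases hc : y h
      · rw [hc] at hS0; exact absurd hS0 (by decide)
      · rfl
    rcases Nat.lt_or_ge h 2 with hhs | hh2
    · interval_cases h
      · rw [hy0] at hht; exact absurd hht (by decide)
      · rw [hy1] at hht; exact absurd hht (by decide)
    · have hN : 2*h + 6 ≤ N := by omega
      have E0 := S 0 (by omega)
      have E1 := S 1 (by omega)
      have E2 := S 2 (by omega)
      have E3 := S 3 (by omega)
      rw [show 0 + p = 2*h+1 by omega] at E0
      rw [show 1 + p = 2*h+2 by omega] at E1
      rw [show 2 + p = 2*h+3 by omega] at E2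
      rw [show 3 + p = 2*h+4 by omega] at E3
      obtain ⟨c1, c2⟩ := cube_of_odd_run y h E0 E1 E2 E3
      exact notFree_of_cube y h c1 c2 hy


end Stmt10Aux

theorem stmt10 (x : ℕ → Bool) :
    Free73 (appendInf [false] (muI (appendInf [false, false] (muI x)))) ↔
    Free73 (appendInf [false, false] (muI x)) := by
  constructor
  · -- Free z → Free y : a violation in y doubles to a violation in z
    intro hz
    by_contra hy
    obtain ⟨i, p, N, h1, h2, h3⟩ := run_of_notFree _ hy
    refine notFree_of_run _ (1+2*i) (2*p) (2*N) (by omega) (by omega) ?_ hz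
    intro t ht
    obtain ⟨d, hd⟩ : ∃ d, t = 2*d ∨ t = 2*d+1 := ⟨t/2, by omega⟩
    rcases hd with rfl | rfl
    · rw [show 1+2*i+2*d+2*p = (2*(i+d+p))+1 by omega, show 1+2*i+2*d = (2*(i+d))+1 by omega,
          app1_succ, app1_succ, muI_even, muI_even]
      exact h3 d (by omega)
    · rw [show 1+2*i+(2*d+1)+2*p = (2*(i+d+p)+1)+1 by omega,
          show 1+2*i+(2*d+1) = (2*(i+d)+1)+1 by omega,
          app1_succ, app1_succ, muI_odd, muI_odd]
      rw [h3 d (by omega)]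
  · -- Free y → Free z
    intro hy
    by_contra hz
    obtain ⟨i, p, N, h1, h2, h3⟩ := run_of_notFree _ hz
    rcases Nat.eq_zero_or_pos i with rfl | hi
    · exact no_prefix_run x _ (fun n => app2_succ (muI x) n) (app2_zero _) (app2_one _)
        hy p N h1 h2 (fun t ht => by simpa using h3 t ht)
    · apply no_run_muI _ hy (i-1) p N h1 h2
      intro t ht
      have := h3 t ht
      rwa [show i+t+p = (i-1+t+p)+1 by omega, show i+t = (i-1+t)+1 by omega,
           app1_succ, app1_succ] at this
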